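/- Let T be a (possibly unbounded) subnormal operator in H with normal extension N acting on K ⊇ H, let P be the orthogonal projection of K onto H, and let k be a positive integer. Then P maps D((N*)ᵏ) into D((T*)ᵏ), and P(N*)ᵏh = (T*)ᵏPh for all h ∈ D((N*)ᵏ). -/

import Mathlib

set_option maxHeartbeats 1000000 in
/-- Composition of partial linear maps with the natural (maximal) domain. -/
noncomputable def LinearPMap.pcomp {R : Type*} [Ring R] {E F G : Type*}
    [AddCommGroup E] [Module R E] [AddCommGroup F] [Module R F]
    [AddCommGroup G] [Module R G]
    (f : F →ₗ.[R] G) (g : E →ₗ.[R] F) : E →ₗ.[R] G where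
  domain :=
  { carrier := {x | ∃ hx : x ∈ g.domain, g ⟨x, hx⟩ ∈ f.domain}
    add_mem' := by
      rintro x y ⟨hx, hfx⟩ ⟨hy, hfy⟩
      refine ⟨add_mem hx hy, ?_⟩
      have : (⟨x + y, add_mem hx hy⟩ : g.domain) = ⟨x, hx⟩ + ⟨y, hy⟩ := rfl
      rw [this, g.map_add]
      exact add_mem hfx hfy
    zero_mem' := by
      refine ⟨zero_mem _, ?_⟩
      have : (⟨0, zero_mem _⟩ : g.domain) = 0 := rfl
      rw [this, g.map_zero]
      exact zero_mem _
    smul_mem' := by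
      rintro c x ⟨hx, hfx⟩
      refine ⟨g.domain.smul_mem c hx, ?_⟩
      have : (⟨c • x, g.domain.smul_mem c hx⟩ : g.domain) = c • (⟨x, hx⟩ : g.domain) := rfl
      rw [this, g.map_smul]
      exact f.domain.smul_mem c hfx }
  toFun :=
  { toFun := fun x => f ⟨g ⟨x.1, x.2.choose⟩, x.2.choose_spec⟩
    map_add' := by
      rintro ⟨x, hx⟩ ⟨y, hy⟩
      have key : ∀ (a : F) (ha : a ∈ f.domain) (b : F) (hb : b ∈ f.domain),
          a = b → f ⟨a, ha⟩ = f ⟨b, hb⟩ := by rintro a ha b hb rfl; rfl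
      have keyg : ∀ (a b : g.domain), (a : E) = (b : E) → g a = g b := by
        intro a b h; cases Subtype.ext h; rfl
      rw [← f.map_add]
      apply key
      rw [← g.map_add]
      exact keyg _ _ rfl
    map_smul' := by
      rintro c ⟨x, hx⟩
      have key : ∀ (a : F) (ha : a ∈ f.domain) (b : F) (hb : b ∈ f.domain),
          a = b → f ⟨a, ha⟩ = f ⟨b, hb⟩ := by rintro a ha b hb rfl; rfl
      have keyg : ∀ (a b : g.domain), (a : E) = (b : E) → g a = g b := by
        intro a b h; cases Subtype.ext h; rfl
      rw [← f.map_smul]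
      apply key
      rw [← g.map_smul]
      exact keyg _ _ rfl }

/-- `k`-th power of a partial linear map. -/
noncomputable def LinearPMap.ppow {R : Type*} [Ring R] {E : Type*}
    [AddCommGroup E] [Module R E] (f : E →ₗ.[R] E) : ℕ → (E →ₗ.[R] E)
  | 0 => LinearMap.id.toPMap ⊤
  | k + 1 => f.pcomp (f.ppow k)

/-! With `P = J†`: for `y ∈ D(N†)` and `x ∈ D(T)`,
`⟨P N† y, x⟩ = ⟨N† y, J x⟩ = ⟨y, N J x⟩ = ⟨y, J T x⟩ = ⟨P y, T x⟩`,
so `P y ∈ D(T†)` and `T† P y = P N† y`. Such intertwining relations compose, which gives the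
statement for `(N†)ᵏ` by induction on `k`. -/

namespace LinearPMap

section Intertwines

variable {R : Type*} [Ring R] {E E' E'' F F' F'' : Type*}
  [AddCommGroup E] [Module R E] [AddCommGroup E'] [Module R E'] [AddCommGroup E''] [Module R E'']
  [AddCommGroup F] [Module R F] [AddCommGroup F'] [Module R F'] [AddCommGroup F''] [Module R F'']

def Intertwines (f : E →ₗ.[R] E') (g : F →ₗ.[R] F') (A : E → F) (B : E' → F') : Prop :=
  ∀ x : f.domain, ∃ hx : A x ∈ g.domain, g ⟨A x, hx⟩ = B (f x)

theorem apply_congr (f : E →ₗ.[R] F) {a b : E} (ha : a ∈ f.domain) (hb : b ∈ f.domain)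
    (h : a = b) : f ⟨a, ha⟩ = f ⟨b, hb⟩ := by
  cases h; rfl

theorem Intertwines.pcomp {f : E →ₗ.[R] E'} {g : F →ₗ.[R] F'} {f' : E' →ₗ.[R] E''}
    {g' : F' →ₗ.[R] F''} {A : E → F} {B : E' → F'} {C : E'' → F''}
    (h : Intertwines f g A B) (h' : Intertwines f' g' B C) :
    Intertwines (f'.pcomp f) (g'.pcomp g) A C := by
  intro x
  obtain ⟨hx, hfx⟩ : ∃ hx : (x : E) ∈ f.domain, f ⟨x, hx⟩ ∈ f'.domain := x.2
  obtain ⟨hAx, hgAx⟩ := h ⟨x, hx⟩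
  obtain ⟨hBfx, hg'Bfx⟩ := h' ⟨f ⟨x, hx⟩, hfx⟩
  have hgAx_mem : g ⟨A x, hAx⟩ ∈ g'.domain := hgAx ▸ hBfx
  refine ⟨⟨hAx, hgAx_mem⟩, ?_⟩
  calc g'.pcomp g ⟨A x, _⟩ = g' ⟨g ⟨A x, hAx⟩, hgAx_mem⟩ := rfl
    _ = g' ⟨B (f ⟨x, hx⟩), hBfx⟩ := apply_congr g' hgAx_mem hBfx hgAx
    _ = C (f'.pcomp f x) := hg'Bfx

theorem intertwines_ppow_zero (f : E →ₗ.[R] E) (g : F →ₗ.[R] F) (A : E → F) :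
    Intertwines (f.ppow 0) (g.ppow 0) A A :=
  fun _ => ⟨Submodule.mem_top, rfl⟩

theorem Intertwines.ppow {f : E →ₗ.[R] E} {g : F →ₗ.[R] F} {A : E → F}
    (h : Intertwines f g A A) : ∀ k, Intertwines (f.ppow k) (g.ppow k) A A
  | 0 => intertwines_ppow_zero f g A
  | k + 1 => (h.ppow k).pcomp h

end Intertwines

section Adjoint

variable {𝕜 E E' F F' : Type*} [RCLike 𝕜]
  [NormedAddCommGroup E] [InnerProductSpace 𝕜 E] [CompleteSpace E]
  [NormedAddCommGroup E'] [InnerProductSpace 𝕜 E'] [CompleteSpace E']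
  [NormedAddCommGroup F] [InnerProductSpace 𝕜 F] [CompleteSpace F]
  [NormedAddCommGroup F'] [InnerProductSpace 𝕜 F'] [CompleteSpace F']

theorem Intertwines.adjoint {T : E →ₗ.[𝕜] E'} {N : F →ₗ.[𝕜] F'} {A : E →L[𝕜] F}
    {B : E' →L[𝕜] F'} (hT : Dense (T.domain : Set E)) (hN : Dense (N.domain : Set F))
    (h : Intertwines T N A B) :
    Intertwines N.adjoint T.adjoint (ContinuousLinearMap.adjoint B)
      (ContinuousLinearMap.adjoint A) := by
  intro y
  have hinner : ∀ x : T.domain,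
      inner 𝕜 (ContinuousLinearMap.adjoint A (N.adjoint y)) (x : E) =
        inner 𝕜 (ContinuousLinearMap.adjoint B (y : F')) (T x) := by
    intro x
    obtain ⟨hAx, hNAx⟩ := h x
    rw [ContinuousLinearMap.adjoint_inner_left, ContinuousLinearMap.adjoint_inner_left, ← hNAx]
    exact adjoint_isFormalAdjoint hN y ⟨A x, hAx⟩
  have hmem := mem_adjoint_domain_of_exists _ ⟨_, hinner⟩
  exact ⟨hmem, adjoint_apply_eq hT ⟨_, hmem⟩ hinner⟩

end Adjoint

end LinearPMap

open ContinuousLinearMap in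
theorem stmt_17_general {H K : Type*} [NormedAddCommGroup H] [InnerProductSpace ℂ H] [CompleteSpace H] [NormedAddCommGroup K] [InnerProductSpace ℂ K] [CompleteSpace K]
    (T : H →ₗ.[ℂ] H) (N : K →ₗ.[ℂ] K) (J : H →ₗᵢ[ℂ] K)
    (hTdense : Dense (T.domain : Set H)) (hNdense : Dense (N.domain : Set K))
    (hext : ∀ h : T.domain, ∃ hm : J (h : H) ∈ N.domain, N ⟨J (h : H), hm⟩ = J (T h))
    (k : ℕ) :
    ∀ g : (N.adjoint.ppow k).domain,
      ∃ hm : adjoint J.toContinuousLinearMap (g : K) ∈ (T.adjoint.ppow k).domain,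
        T.adjoint.ppow k ⟨adjoint J.toContinuousLinearMap (g : K), hm⟩ =
          adjoint J.toContinuousLinearMap (N.adjoint.ppow k g) :=
  (LinearPMap.Intertwines.adjoint (A := J.toContinuousLinearMap)
    (B := J.toContinuousLinearMap) hTdense hNdense hext).ppow k

open ContinuousLinearMap in
theorem stmt_17 {H K : Type*} [NormedAddCommGroup H] [InnerProductSpace ℂ H] [CompleteSpace H] [NormedAddCommGroup K] [InnerProductSpace ℂ K] [CompleteSpace K]
    (T : H →ₗ.[ℂ] H) (N : K →ₗ.[ℂ] K) (J : H →ₗᵢ[ℂ] K)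
    (hTdense : Dense (T.domain : Set H)) (hNdense : Dense (N.domain : Set K))
    (hNclosed : N.IsClosed)
    (hNnormal : N.adjoint.pcomp N = N.pcomp N.adjoint)
    (hext : ∀ h : T.domain, ∃ hm : J (h : H) ∈ N.domain, N ⟨J (h : H), hm⟩ = J (T h))
    (k : ℕ) (hk : 0 < k) :
    ∀ g : (N.adjoint.ppow k).domain,
      ∃ hm : adjoint J.toContinuousLinearMap (g : K) ∈ (T.adjoint.ppow k).domain,
        T.adjoint.ppow k ⟨adjoint J.toContinuousLinearMap (g : K), hm⟩ =
          adjoint J.toContinuousLinearMap (N.adjoint.ppow k g) :=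
  stmt_17_general T N J hTdense hNdense hext k
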